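/- Explicit primal–dual marginal mapping for the Ising model (equation (44)): with J(e) ≥ 0 for all e, H(v) ≥ 0 for all v, and J(e₀) > 0 for a fixed edge e₀, the primal and dual edge marginals at e₀ satisfy π_p(e₀) = e^{J(e₀)}·( π_d(e₀)/(2·cosh(J(e₀))) + (1 − π_d(e₀))/(2·sinh(J(e₀))) ), where π_p(e₀) = (Σ_{x : x(s e₀) = x(t e₀)} w(x)) / (Σ_x w(x)) and π_d(e₀) = (Σ_{ỹ : ỹ(e₀) = 0} W(ỹ)) / (Σ_ỹ W(ỹ)). -/

import Mathlib

open scoped BigOperators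

/-- The weight of a primal Ising configuration `x : V → ZMod 2`. -/
noncomputable def isingWeight {V E : Type*} [Fintype V] [Fintype E]
    (s t : E → V) (J : E → ℝ) (H : V → ℝ) (x : V → ZMod 2) : ℝ :=
  (∏ e : E, Real.exp (J e * (if x (s e) = x (t e) then 1 else -1))) *
    ∏ v : V, Real.exp (H v * (if x v = 0 then 1 else -1))

/-- The dual vertex variable `x̃_v(yt)` in `ZMod 2`. -/
noncomputable def dualX2 {V E : Type*} [Fintype E] [DecidableEq V]
    (s t : E → V) (yt : E → ZMod 2) (v : V) : ZMod 2 :=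
  (∑ e ∈ Finset.univ.filter (fun e => s e = v), yt e) +
    ∑ e ∈ Finset.univ.filter (fun e => t e = v), yt e

/-- The weight of a dual Ising configuration `yt : E → ZMod 2`. -/
noncomputable def dualIsingWeight {V E : Type*} [Fintype V] [Fintype E] [DecidableEq V]
    (s t : E → V) (J : E → ℝ) (H : V → ℝ) (yt : E → ZMod 2) : ℝ :=
  (∏ e : E, if yt e = 0 then Real.cosh (J e) else Real.sinh (J e)) *
    ∏ v : V, if dualX2 s t yt v = 0 then Real.cosh (H v) else Real.sinh (H v)

/-!
Write `σ` for the sign character of `ZMod 2` and `f̂ m = ∑ b, f b σ(b m)` for the Walsh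
transform. Each Boltzmann factor is a transform, `exp (a σ(m)) = f̂ m` with
`f = (cosh a, sinh a)`, so expanding the products and summing out the spins with the
orthogonality `∑ x, σ(c ⬝ᵥ x) = 2^|V| [c = 0]` turns
`∑ x, ∏ₑ ĉₑ(x (s e) + x (t e)) ∏ᵥ d̂ᵥ(x v)` into `2^|V| ∑ y, ∏ₑ cₑ(y e) ∏ᵥ dᵥ(x̃ᵥ(y))`;
the vertex constraint comes from `∑ₑ y e (x (s e) + x (t e)) = x̃(y) ⬝ᵥ x`. With the true
factors this is `Z_p = 2^|V| Z_d`. Replacing the factor of `e₀` by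
`e^{J e₀} [x (s e₀) = x (t e₀)]`, the transform of the constant `e^{J e₀}/2`, gives the primal
numerator `2^|V| e^{J e₀} (A + B) / 2`, where `A` and `B` are the dual sums over `y e₀ = 0` and
`y e₀ = 1` with the factor of `e₀` removed. Since `Z_d = cosh (J e₀) A + sinh (J e₀) B`, the
mapping is then an identity of rational functions.
-/

open Finset Matrix

theorem AddChar.map_sum_eq_prod {A M ι : Type*} [AddCommMonoid A] [CommMonoid M]
    (ψ : AddChar A M) (s : Finset ι) (f : ι → A) : ψ (∑ i ∈ s, f i) = ∏ i ∈ s, ψ (f i) := by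
  induction s using Finset.cons_induction with
  | empty => simp
  | cons i s _ ih => rw [sum_cons, prod_cons, map_add_eq_mul, ih]

theorem Finset.prod_apply_update {ι β M : Type*} [Fintype ι] [DecidableEq ι] [CommMonoid M]
    (φ : ι → β → M) (c : ι → β) (i : ι) (b : β) :
    ∏ j, φ j (Function.update c i b j) = φ i b * ∏ j ∈ univ.erase i, φ j (c j) := by
  simp_rw [Function.apply_update φ]
  rw [prod_update_of_mem (mem_univ i), sdiff_singleton_eq_erase]

namespace ZMod

theorem sum_univ_two {M : Type*} [AddCommMonoid M] (f : ZMod 2 → M) :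
    ∑ a : ZMod 2, f a = f 0 + f 1 :=
  Fin.sum_univ_two f

theorem eq_zero_or_eq_one_of_two (a : ZMod 2) : a = 0 ∨ a = 1 := by
  decide +revert

variable (R : Type*) [CommRing R]

def signChar : AddChar (ZMod 2) R where
  toFun a := if a = 0 then 1 else -1
  map_zero_eq_one' := if_pos rfl
  map_add_eq_mul' a b := by
    rcases eq_zero_or_eq_one_of_two a with rfl | rfl <;>
      rcases eq_zero_or_eq_one_of_two b with rfl | rfl <;> simp +decide

variable {R}

theorem signChar_apply (a : ZMod 2) : signChar R a = if a = 0 then 1 else -1 := rfl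

theorem sum_signChar_mul (c : ZMod 2) :
    ∑ a : ZMod 2, signChar R (c * a) = if c = 0 then 2 else 0 := by
  rcases eq_zero_or_eq_one_of_two c with rfl | rfl <;>
    simp +decide [sum_univ_two, signChar_apply]

theorem sum_signChar_dotProduct {V : Type*} [Fintype V] [DecidableEq V] (c : V → ZMod 2) :
    ∑ x : V → ZMod 2, signChar R (c ⬝ᵥ x) = if c = 0 then 2 ^ Fintype.card V else 0 := by
  simp_rw [dotProduct, AddChar.map_sum_eq_prod]
  rw [← Fintype.prod_sum (fun v a => signChar R (c v * a))]
  simp_rw [sum_signChar_mul, prod_ite_zero, prod_const, card_univ, funext_iff]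
  simp

def walshTransform (f : ZMod 2 → R) (m : ZMod 2) : R :=
  ∑ b, f b * signChar R (b * m)

theorem walshTransform_const (r : R) (m : ZMod 2) :
    walshTransform (fun _ => r) m = if m = 0 then 2 * r else 0 := by
  simp_rw [walshTransform, mul_comm (_ : ZMod 2) m]
  rw [← mul_sum, sum_signChar_mul, mul_ite, mul_zero, mul_comm]

end ZMod

open ZMod

section Duality

variable {V E : Type*} [Fintype V] [Fintype E] [DecidableEq V]

theorem sum_sum_filter_mul_eq_sum_mul_comp {S : Type*} [NonUnitalNonAssocSemiring S]
    (g : E → V) (y : E → S) (x : V → S) :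
    ∑ v, (∑ e with g e = v, y e) * x v = ∑ e, y e * x (g e) := by
  rw [← sum_fiberwise univ g (fun e => y e * x (g e))]
  refine sum_congr rfl fun v _ => ?_
  rw [sum_mul]
  exact sum_congr rfl fun e he => by rw [(mem_filter.1 he).2]

theorem dualX2_dotProduct (s t : E → V) (y : E → ZMod 2) (x : V → ZMod 2) :
    dualX2 s t y ⬝ᵥ x = ∑ e, y e * (x (s e) + x (t e)) := by
  simp only [dotProduct, dualX2, add_mul, sum_add_distrib, mul_add,
    sum_sum_filter_mul_eq_sum_mul_comp]

variable [DecidableEq E] {R : Type*} [CommRing R]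

theorem sum_prod_walshTransform_eq (s t : E → V) (c : E → ZMod 2 → R) (d : V → ZMod 2 → R) :
    ∑ x : V → ZMod 2,
        (∏ e, walshTransform (c e) (x (s e) + x (t e))) * ∏ v, walshTransform (d v) (x v) =
      2 ^ Fintype.card V * ∑ y : E → ZMod 2, (∏ e, c e (y e)) * ∏ v, d v (dualX2 s t y v) := by
  have character (x : V → ZMod 2) (y : E → ZMod 2) (z : V → ZMod 2) :
      (∏ e, c e (y e) * signChar R (y e * (x (s e) + x (t e)))) *
          ∏ v, d v (z v) * signChar R (z v * x v) =
        ((∏ e, c e (y e)) * ∏ v, d v (z v)) * signChar R ((dualX2 s t y + z) ⬝ᵥ x) := by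
    rw [add_dotProduct, AddChar.map_add_eq_mul, dualX2_dotProduct, dotProduct,
      AddChar.map_sum_eq_prod, AddChar.map_sum_eq_prod, prod_mul_distrib, prod_mul_distrib]
    ring
  have dual_eq (y : E → ZMod 2) (z : V → ZMod 2) :
      dualX2 s t y + z = 0 ↔ z = dualX2 s t y := by
    simp only [funext_iff]
    exact forall_congr' fun v => by
      rw [Pi.add_apply, Pi.zero_apply, CharTwo.add_eq_zero, eq_comm]
  simp only [walshTransform, Fintype.prod_sum, sum_mul_sum, character]
  rw [sum_comm, mul_sum]
  refine sum_congr rfl fun y _ => ?_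
  rw [sum_comm]
  simp only [← mul_sum, sum_signChar_dotProduct, dual_eq, mul_ite, mul_zero,
    Fintype.sum_ite_eq']
  exact mul_comm _ _

end Duality

section Ising

open Real

noncomputable def coshSinh (a : ℝ) (b : ZMod 2) : ℝ :=
  if b = 0 then cosh a else sinh a

theorem walshTransform_coshSinh (a : ℝ) (m : ZMod 2) :
    walshTransform (coshSinh a) m = exp (a * if m = 0 then 1 else -1) := by
  rcases eq_zero_or_eq_one_of_two m with rfl | rfl <;>
    simp +decide [walshTransform, sum_univ_two, coshSinh, signChar_apply, ← cosh_add_sinh]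

variable {V E : Type*} [Fintype V] [Fintype E]

theorem isingWeight_eq_prod_walshTransform (s t : E → V) (J : E → ℝ) (H : V → ℝ)
    (x : V → ZMod 2) :
    isingWeight s t J H x =
      (∏ e, walshTransform (coshSinh (J e)) (x (s e) + x (t e))) *
        ∏ v, walshTransform (coshSinh (H v)) (x v) := by
  simp only [isingWeight, walshTransform_coshSinh, CharTwo.add_eq_zero]

variable [DecidableEq V] [DecidableEq E]

theorem sum_isingWeight (s t : E → V) (J : E → ℝ) (H : V → ℝ) :
    ∑ x, isingWeight s t J H x = 2 ^ Fintype.card V * ∑ y, dualIsingWeight s t J H y := by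
  simp only [isingWeight_eq_prod_walshTransform]
  exact sum_prod_walshTransform_eq s t _ _

noncomputable def dualIsingWeightErase (s t : E → V) (J : E → ℝ) (H : V → ℝ) (e₀ : E)
    (y : E → ZMod 2) : ℝ :=
  (∏ e ∈ univ.erase e₀, coshSinh (J e) (y e)) * ∏ v, coshSinh (H v) (dualX2 s t y v)

theorem dualIsingWeight_eq_mul_erase (s t : E → V) (J : E → ℝ) (H : V → ℝ) (e₀ : E)
    (y : E → ZMod 2) :
    dualIsingWeight s t J H y = coshSinh (J e₀) (y e₀) * dualIsingWeightErase s t J H e₀ y := by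
  rw [dualIsingWeightErase, ← mul_assoc, ← prod_apply_update (fun e b => coshSinh (J e) b),
    Function.update_eq_self]
  rfl

theorem sum_filter_isingWeight (s t : E → V) (J : E → ℝ) (H : V → ℝ) (e₀ : E) :
    ∑ x with x (s e₀) = x (t e₀), isingWeight s t J H x =
      2 ^ Fintype.card V * (exp (J e₀) / 2 * ∑ y, dualIsingWeightErase s t J H e₀ y) := by
  set g : ZMod 2 → ℝ := fun _ => exp (J e₀) / 2
  have restrict (x : V → ZMod 2) :
      (if x (s e₀) = x (t e₀) then isingWeight s t J H x else 0) =
        (∏ e, walshTransform (Function.update (fun e => coshSinh (J e)) e₀ g e)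
            (x (s e) + x (t e))) * ∏ v, walshTransform (coshSinh (H v)) (x v) := by
    rw [prod_apply_update (fun e f => walshTransform f (x (s e) + x (t e))),
      isingWeight_eq_prod_walshTransform, ← mul_prod_erase univ _ (mem_univ e₀),
      walshTransform_const, walshTransform_coshSinh]
    simp only [CharTwo.add_eq_zero]
    split_ifs
    · rw [mul_one]; ring
    · rw [zero_mul, zero_mul]
  rw [sum_filter, sum_congr rfl fun x _ => restrict x, sum_prod_walshTransform_eq,
    mul_sum (a := exp (J e₀) / 2)]
  refine congrArg _ (sum_congr rfl fun y _ => ?_)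
  rw [prod_apply_update (fun e (f : ZMod 2 → ℝ) => f (y e)), dualIsingWeightErase, mul_assoc]

theorem sum_filter_dualIsingWeight (s t : E → V) (J : E → ℝ) (H : V → ℝ) (e₀ : E)
    (b : ZMod 2) :
    ∑ y with y e₀ = b, dualIsingWeight s t J H y =
      coshSinh (J e₀) b * ∑ y with y e₀ = b, dualIsingWeightErase s t J H e₀ y := by
  rw [mul_sum]
  refine sum_congr rfl fun y hy => ?_
  rw [dualIsingWeight_eq_mul_erase s t J H e₀, (mem_filter.1 hy).2]

theorem sum_dualIsingWeight (s t : E → V) (J : E → ℝ) (H : V → ℝ) (e₀ : E) :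
    ∑ y, dualIsingWeight s t J H y =
      cosh (J e₀) * ∑ y with y e₀ = 0, dualIsingWeightErase s t J H e₀ y +
        sinh (J e₀) * ∑ y with y e₀ = 1, dualIsingWeightErase s t J H e₀ y := by
  rw [← sum_fiberwise univ (· e₀), sum_univ_two, sum_filter_dualIsingWeight,
    sum_filter_dualIsingWeight]
  simp +decide [coshSinh]

end Ising

theorem ising_marginal_mapping_general {V E : Type*} [Fintype V] [Fintype E]
    [DecidableEq V] [DecidableEq E]
    (s t : E → V) (J : E → ℝ) (H : V → ℝ)
    (e₀ : E) (hJ₀ : 0 < J e₀) :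
    (∑ x ∈ Finset.univ.filter (fun x : V → ZMod 2 => x (s e₀) = x (t e₀)),
        isingWeight s t J H x) / (∑ x : V → ZMod 2, isingWeight s t J H x) =
      Real.exp (J e₀) *
        (((∑ yt ∈ Finset.univ.filter (fun yt : E → ZMod 2 => yt e₀ = 0),
            dualIsingWeight s t J H yt) / (∑ yt : E → ZMod 2, dualIsingWeight s t J H yt)) /
            (2 * Real.cosh (J e₀)) +
          (1 - (∑ yt ∈ Finset.univ.filter (fun yt : E → ZMod 2 => yt e₀ = 0),
            dualIsingWeight s t J H yt) / (∑ yt : E → ZMod 2, dualIsingWeight s t J H yt)) /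
            (2 * Real.sinh (J e₀))) := by
  set A := ∑ y with y e₀ = 0, dualIsingWeightErase s t J H e₀ y
  set B := ∑ y with y e₀ = 1, dualIsingWeightErase s t J H e₀ y
  have hA : ∑ y with y e₀ = 0, dualIsingWeight s t J H y = Real.cosh (J e₀) * A := by
    rw [sum_filter_dualIsingWeight, coshSinh, if_pos rfl]
  have hZd : ∑ y, dualIsingWeight s t J H y = Real.cosh (J e₀) * A + Real.sinh (J e₀) * B :=
    sum_dualIsingWeight s t J H e₀
  have hZ : A * Real.cosh (J e₀) + B * Real.sinh (J e₀) ≠ 0 := by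
    have hpos : 0 < ∑ x, isingWeight s t J H x :=
      sum_pos (fun x _ => by unfold isingWeight; positivity) univ_nonempty
    rw [sum_isingWeight, hZd] at hpos
    rw [mul_comm A, mul_comm B]
    exact (pos_of_mul_pos_right hpos (by positivity)).ne'
  have hsinh : Real.sinh (J e₀) ≠ 0 := (Real.sinh_pos_iff.2 hJ₀).ne'
  have hrest : ∑ y, dualIsingWeightErase s t J H e₀ y = A + B := by
    rw [← sum_fiberwise univ (· e₀), sum_univ_two]
  rw [sum_filter_isingWeight, sum_isingWeight, hZd, hA, hrest]
  field_simp
  ring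

/-- Explicit primal–dual marginal mapping for the Ising model (equation (44)):
`π_p(e₀) = e^{J e₀}·( π_d(e₀)/(2 cosh(J e₀)) + (1 − π_d(e₀))/(2 sinh(J e₀)) )`. -/
theorem ising_marginal_mapping {V E : Type*} [Fintype V] [Fintype E]
    [DecidableEq V] [DecidableEq E]
    (s t : E → V) (J : E → ℝ) (H : V → ℝ)
    (hJ : ∀ e, 0 ≤ J e) (hH : ∀ v, 0 ≤ H v) (e₀ : E) (hJ₀ : 0 < J e₀) :
    (∑ x ∈ Finset.univ.filter (fun x : V → ZMod 2 => x (s e₀) = x (t e₀)),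
        isingWeight s t J H x) / (∑ x : V → ZMod 2, isingWeight s t J H x) =
      Real.exp (J e₀) *
        (((∑ yt ∈ Finset.univ.filter (fun yt : E → ZMod 2 => yt e₀ = 0),
            dualIsingWeight s t J H yt) / (∑ yt : E → ZMod 2, dualIsingWeight s t J H yt)) /
            (2 * Real.cosh (J e₀)) +
          (1 - (∑ yt ∈ Finset.univ.filter (fun yt : E → ZMod 2 => yt e₀ = 0),
            dualIsingWeight s t J H yt) / (∑ yt : E → ZMod 2, dualIsingWeight s t J H yt)) /
            (2 * Real.sinh (J e₀))) :=
  ising_marginal_mapping_general s t J H e₀ hJ₀
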